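/- Impulsive Gronwall inequality: let v : [0, T] → ℝ≥0 be piecewise continuous with possible jumps at fixed points 0 < t₁ < ⋯ < t_r < T, a ≥ 0, β : [0, T] → ℝ≥0 integrable, and c_k ≥ 0 for k = 1, …, r. If v(t) ≤ a + ∫₀ᵗ β(s) v(s) ds + Σ_{t_k < t} c_k v(t_k) for all t ∈ [0, T], then v(t) ≤ a · ∏_{t_k < t} (1 + c_k) · exp(∫₀ᵗ β(s) ds). -/

import Mathlib

open MeasureTheory Real Finset

open Set Filter Topology intervalIntegral

/-!
The function `w t = A * ∏_{t_k < t} (1 + c_k) * exp (∫₀ᵗ β)` solves the linear impulsive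
equation `w t = A + ∫₀ᵗ β w + ∑_{t_k < t} c_k w (t_k)` exactly: between impulses this is the
fundamental theorem of calculus for the absolutely continuous function `exp (∫₀ᵗ β)`, and at an
impulse both sides jump by `c_k w (t_k)`. If `A > a`, then `v < w` on `[0, T]` by real induction:
as long as `v < w` before `τ`, the right-hand side of the inequality for `v` stays below that of the
equation for `w` by at least `A - a`, at `τ` and also just to the right of `τ`, because the impulse
sum is locally constant from the right and the integral of `β v` is right-continuous (or is the
junk value `0`, where `β v` fails to be integrable). Letting `A` decrease to `a` gives the bound.
-/

theorem LipschitzOnWith.comp_absolutelyContinuousOnInterval {X Y : Type*} [PseudoMetricSpace X]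
    [PseudoMetricSpace Y] {g : X → Y} {K : NNReal} {s : Set X} {f : ℝ → X} {a b : ℝ}
    (hg : LipschitzOnWith K g s) (hf : AbsolutelyContinuousOnInterval f a b)
    (hfs : MapsTo f (uIcc a b) s) : AbsolutelyContinuousOnInterval (g ∘ f) a b := by
  unfold AbsolutelyContinuousOnInterval at *
  have hKf := hf.const_mul (K : ℝ)
  rw [mul_zero] at hKf
  refine squeeze_zero' (.of_forall fun _ ↦ sum_nonneg fun _ _ ↦ dist_nonneg) ?_ hKf
  filter_upwards [mem_inf_of_right (mem_principal_self _)] with E hE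
  rw [mul_sum]
  gcongr with i hi
  exact hg.dist_le_mul _ (hfs (hE.1 i hi).1) _ (hfs (hE.1 i hi).2)

theorem intervalIntegral.integral_mul_exp_integral {β : ℝ → ℝ} {a b : ℝ}
    (hβ : IntervalIntegrable β volume a b) :
    ∫ x in a..b, β x * exp (∫ y in a..x, β y) = exp (∫ y in a..b, β y) - 1 := by
  have hF := hβ.absolutelyContinuousOnInterval_intervalIntegral left_mem_uIcc
  obtain ⟨K, hK⟩ :=
    contDiff_exp.locallyLipschitz.locallyLipschitzOn.exists_lipschitzOnWith_of_compact
      (isCompact_uIcc.image_of_continuousOn hF.continuousOn)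
  have hexpF :=
    (hK.comp_absolutelyContinuousOnInterval hF (mapsTo_image _ _)).integral_deriv_eq_sub
  rw [Function.comp_apply, Function.comp_apply, integral_same, exp_zero] at hexpF
  rw [← hexpF]
  refine integral_congr_ae ?_
  filter_upwards [hβ.ae_hasDerivAt_integral] with x hx hxI
  rw [Function.comp_def, (hx (uIoc_subset_uIcc hxI) a left_mem_uIcc).exp.deriv, mul_comm]

section ImpulsiveExp

variable {ι : Type*} {A : ℝ} {β : ℝ → ℝ} {s c : ι → ℝ}

variable (A β s c) in
noncomputable def impulsiveExp (J : Finset ι) (t : ℝ) : ℝ :=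
  A * (∏ k ∈ J, if s k < t then 1 + c k else 1) * exp (∫ x in 0..t, β x)

theorem impulsiveExp_insert [DecidableEq ι] {J : Finset ι} {m : ι} (hm : m ∉ J) (t : ℝ) :
    impulsiveExp A β s c (insert m J) t =
      (if s m < t then 1 + c m else 1) * impulsiveExp A β s c J t := by
  simp only [impulsiveExp, Finset.prod_insert hm]
  ring

theorem impulsiveExp_nonneg (hA : 0 ≤ A) {J : Finset ι} (hc : ∀ k ∈ J, 0 ≤ c k) (t : ℝ) :
    0 ≤ impulsiveExp A β s c J t :=
  mul_nonneg (mul_nonneg hA (prod_nonneg fun k hk ↦ by split_ifs <;> linarith [hc k hk]))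
    (exp_nonneg _)

theorem IntervalIntegrable.mul_impulsiveExp {t : ℝ} (hβ : IntervalIntegrable β volume 0 t)
    (A : ℝ) (s c : ι → ℝ) (J : Finset ι) :
    IntervalIntegrable (fun x ↦ β x * impulsiveExp A β s c J x) volume 0 t := by
  have hE : IntervalIntegrable (fun x ↦ β x * exp (∫ y in 0..x, β y)) volume 0 t :=
    hβ.mul_continuousOn (continuous_exp.comp_continuousOn
      (continuousOn_primitive_interval' hβ left_mem_uIcc))
  have hP : Measurable fun x ↦ ∏ k ∈ J, if s k < x then 1 + c k else 1 :=
    Finset.measurable_prod _ fun k _ ↦ Measurable.ite measurableSet_Ioi measurable_const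
      measurable_const
  rw [intervalIntegrable_iff] at hE ⊢
  refine ((hE.bdd_mul hP.aestronglyMeasurable (c := ∏ k ∈ J, max |1 + c k| 1)
    (ae_of_all _ fun x ↦ ?_)).const_mul A).congr (ae_of_all _ fun x ↦ ?_)
  · rw [norm_prod]
    exact prod_le_prod (fun _ _ ↦ norm_nonneg _) fun k _ ↦ by split_ifs <;> simp
  · simp only [impulsiveExp]
    ring

theorem impulsiveExp_eq_add_integral_add_sum {J : Finset ι} (hs : ∀ k ∈ J, 0 ≤ s k)
    (hinj : Set.InjOn s J) {t : ℝ} (hβ : IntervalIntegrable β volume 0 t) :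
    impulsiveExp A β s c J t = A + (∫ x in 0..t, β x * impulsiveExp A β s c J x) +
      ∑ k ∈ J, if s k < t then c k * impulsiveExp A β s c J (s k) else 0 := by
  classical
  induction J using Finset.induction_on generalizing t with
  | empty =>
    simp only [impulsiveExp, Finset.prod_empty, mul_one, sum_empty, add_zero,
      mul_left_comm (β _) A, intervalIntegral.integral_const_mul, integral_mul_exp_integral hβ]
    ring
  | insert m J hm ih =>
    have ih := @ih (fun k hk ↦ hs k (mem_insert_of_mem hk))
      (hinj.mono (coe_subset.2 (subset_insert m J)))
    have h0m : 0 ≤ s m := hs m (mem_insert_self m J)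
    simp only [impulsiveExp_insert hm, Finset.sum_insert hm]
    set u := impulsiveExp A β s c J
    by_cases hmt : s m < t
    · have hβm : IntervalIntegrable β volume 0 (s m) :=
        hβ.mono_set (uIcc_subset_uIcc left_mem_uIcc (mem_uIcc_of_le h0m hmt.le))
      have hsplit := integral_interval_sub_left (hβ.mul_impulsiveExp A s c J)
        (hβm.mul_impulsiveExp A s c J)
      have hsplit' := integral_interval_sub_left (hβ.mul_impulsiveExp A s c (insert m J))
        (hβm.mul_impulsiveExp A s c (insert m J))
      simp only [impulsiveExp_insert hm] at hsplit'
      have hbefore : ∫ x in 0..s m, β x * ((if s m < x then 1 + c m else 1) * u x) =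
          ∫ x in 0..s m, β x * u x := by
        refine integral_congr fun x hx ↦ ?_
        rw [uIcc_of_le h0m] at hx
        rw [if_neg hx.2.not_gt, one_mul]
      have hafter : ∫ x in s m..t, β x * ((if s m < x then 1 + c m else 1) * u x) =
          (1 + c m) * ∫ x in s m..t, β x * u x := by
        rw [← intervalIntegral.integral_const_mul]
        refine integral_congr_ae (ae_of_all _ fun x hx ↦ ?_)
        rw [uIoc_of_le hmt.le] at hx
        rw [if_pos hx.1]
        ring
      have hsum : (∑ k ∈ J, if s k < t then c k * ((if s m < s k then 1 + c m else 1) * u (s k))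
            else 0) + c m * ∑ k ∈ J, (if s k < s m then c k * u (s k) else 0) =
          (1 + c m) * ∑ k ∈ J, if s k < t then c k * u (s k) else 0 := by
        -- `c m * c k * u (s k)` enters once: through `u (s k)` if `s m < s k`, through `u (s m)` if
        -- `s k < s m`
        rw [mul_sum, mul_sum, ← sum_add_distrib]
        refine sum_congr rfl fun k hk ↦ ?_
        have hne : s k ≠ s m := fun h ↦
          hm (hinj (mem_insert_of_mem hk) (mem_insert_self m J) h ▸ hk)
        rcases hne.lt_or_gt with h | h <;> split_ifs <;> first | (exfalso; linarith) | ring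
      rw [if_pos hmt, if_pos hmt, if_neg (lt_irrefl _), one_mul, ih hβ]
      linear_combination (1 + c m) * hsplit - hsplit' - hbefore - hafter - hsum - c m * ih hβm
    · have hle : ∀ x ∈ uIcc 0 t, ¬ s m < x := fun x hx ↦
        not_lt.2 (hx.2.trans (max_le h0m (not_lt.1 hmt)))
      rw [if_neg hmt, one_mul, if_neg hmt, zero_add,
        integral_congr fun x hx ↦ by rw [if_neg (hle x hx), one_mul]]
      refine (ih hβ).trans (congrArg _ (sum_congr rfl fun k _ ↦ ?_))
      exact if_ctx_congr Iff.rfl (fun hk ↦ by rw [if_neg (by linarith), one_mul]) fun _ ↦ rfl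

end ImpulsiveExp

theorem Icc_subset_of_forall_mem_nhdsGT_of_Ico_subset {α : Type*}
    [ConditionallyCompleteLinearOrder α] [TopologicalSpace α] [OrderTopology α] {a b : α}
    {s : Set α} (hmem : ∀ x ∈ Icc a b, Ico a x ⊆ s → x ∈ s)
    (hnhds : ∀ x ∈ Ico a b, Icc a x ⊆ s → s ∈ 𝓝[>] x) : Icc a b ⊆ s := by
  intro x hx
  by_contra hxs
  set S := Icc a b \ s
  have hSne : S.Nonempty := ⟨x, hx, hxs⟩
  have hSbdd : BddBelow S := ⟨a, fun y hy ↦ hy.1.1⟩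
  set τ := sInf S
  have hτx : τ ≤ x := csInf_le hSbdd ⟨hx, hxs⟩
  have haτ : a ≤ τ := le_csInf hSne fun y hy ↦ hy.1.1
  have hbelow : Ico a τ ⊆ s := fun y hy ↦ by_contra fun hys ↦
    hy.2.not_ge (csInf_le hSbdd ⟨⟨hy.1, hy.2.le.trans (hτx.trans hx.2)⟩, hys⟩)
  have hτs : τ ∈ s := hmem τ ⟨haτ, hτx.trans hx.2⟩ hbelow
  have hτx' : τ < x := hτx.lt_of_ne (by rintro rfl; exact hxs hτs)
  have hupto : Icc a τ ⊆ s := fun y hy ↦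
    hy.2.lt_or_eq.elim (fun h ↦ hbelow ⟨hy.1, h⟩) fun h ↦ h ▸ hτs
  obtain ⟨m, hτm, hm⟩ := (mem_nhdsGT_iff_exists_Ioo_subset' hτx').1
    (hnhds τ ⟨haτ, hτx'.trans_le hx.2⟩ hupto)
  obtain ⟨y, hyS, hym⟩ := exists_lt_of_csInf_lt hSne hτm
  have hτy : τ < y := (csInf_le hSbdd hyS).lt_of_ne (by rintro rfl; exact hyS.2 hτs)
  exact hyS.2 (hm ⟨hτy, hym⟩)

theorem eventually_nhdsGT_forall_lt_imp_le {ι α : Type*} [Finite ι] [LinearOrder α]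
    [TopologicalSpace α] [OrderTopology α] (s : ι → α) (x : α) :
    ∀ᶠ y in 𝓝[>] x, ∀ k, s k < y → s k ≤ x := by
  refine eventually_all.2 fun k ↦ ?_
  by_cases hk : s k ≤ x
  · exact .of_forall fun _ _ ↦ hk
  · filter_upwards [nhdsWithin_le_nhds (eventually_lt_nhds (not_le.1 hk))] with y hy hky
    exact absurd hky hy.not_gt

theorem intervalIntegral.integral_mono_on_of_le_Ioo_of_nonneg {f g : ℝ → ℝ} {a b : ℝ}
    (hab : a ≤ b) (hg : IntervalIntegrable g volume a b) (hg0 : ∀ x ∈ Ioo a b, 0 ≤ g x)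
    (hfg : ∀ x ∈ Ioo a b, f x ≤ g x) : ∫ x in a..b, f x ≤ ∫ x in a..b, g x := by
  by_cases hf : IntervalIntegrable f volume a b
  · exact integral_mono_on_of_le_Ioo hab hf hg hfg
  · rw [integral_undef hf]
    simpa using integral_mono_on_of_le_Ioo hab intervalIntegrable_const hg hg0

theorem intervalIntegral.eventually_nhdsGT_integral_lt {f : ℝ → ℝ} {a τ M δ : ℝ} (haτ : a ≤ τ)
    (hM : ∫ x in a..τ, f x ≤ M) (hM0 : 0 ≤ M) (hδ : 0 < δ) :
    ∀ᶠ t in 𝓝[>] τ, ∫ x in a..t, f x < M + δ := by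
  by_cases hf : ∃ b > τ, IntervalIntegrable f volume a b
  · obtain ⟨b, hτb, hfb⟩ := hf
    have hcont : ContinuousWithinAt (fun t ↦ ∫ x in a..t, f x) (Ioi τ) τ := by
      refine ((continuousOn_primitive_interval' hfb left_mem_uIcc) τ
        (mem_uIcc_of_le haτ hτb.le)).mono_of_mem_nhdsWithin ?_
      rw [uIcc_of_le (haτ.trans hτb.le)]
      exact mem_of_superset (Icc_mem_nhdsGT hτb) (Icc_subset_Icc_left haτ)
    exact Filter.Tendsto.eventually_lt_const (by linarith) hcont
  · push Not at hf
    filter_upwards [self_mem_nhdsWithin] with t ht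
    rw [integral_undef (hf t ht)]
    linarith

theorem lt_impulsiveExp_of_le_add_integral_add_sum {ι : Type*} [Fintype ι] {T a A : ℝ}
    {β v : ℝ → ℝ} {s c : ι → ℝ} (ha : 0 ≤ a) (haA : a < A) (hs : ∀ k, 0 ≤ s k)
    (hinj : Function.Injective s) (hc : ∀ k, 0 ≤ c k) (hβ0 : ∀ t ∈ Icc 0 T, 0 ≤ β t)
    (hβ : IntegrableOn β (Icc 0 T))
    (hineq : ∀ t ∈ Icc 0 T,
      v t ≤ a + (∫ x in 0..t, β x * v x) + ∑ k, if s k < t then c k * v (s k) else 0) :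
    ∀ t ∈ Icc 0 T, v t < impulsiveExp A β s c univ t := by
  set u := impulsiveExp A β s c univ
  have hβt : ∀ t ∈ Icc 0 T, IntervalIntegrable β volume 0 t := fun t ht ↦
    (hβ.mono_set (by rw [uIcc_of_le ht.1]; exact Icc_subset_Icc_right ht.2)).intervalIntegrable
  have hβu : ∀ x ∈ Icc 0 T, 0 ≤ β x * u x := fun x hx ↦
    mul_nonneg (hβ0 x hx) (impulsiveExp_nonneg (ha.trans haA.le) (fun k _ ↦ hc k) x)
  have hβu_integral_nonneg : ∀ t ∈ Icc 0 T, 0 ≤ ∫ x in 0..t, β x * u x := fun t ht ↦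
    integral_nonneg ht.1 fun x hx ↦ hβu x ⟨hx.1, hx.2.trans ht.2⟩
  have hstep : ∀ t ∈ Icc 0 T, ∫ x in 0..t, β x * v x < (∫ x in 0..t, β x * u x) + (A - a) →
      (∀ k, s k < t → v (s k) ≤ u (s k)) → v t < u t := by
    intro t ht hint hjump
    have hsum : ∑ k, (if s k < t then c k * v (s k) else 0) ≤
        ∑ k, if s k < t then c k * u (s k) else 0 :=
      sum_le_sum fun k _ ↦ by
        split_ifs with hk
        exacts [mul_le_mul_of_nonneg_left (hjump k hk) (hc k), le_rfl]
    have hu : u t = A + (∫ x in 0..t, β x * u x) + ∑ k, if s k < t then c k * u (s k) else 0 :=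
      impulsiveExp_eq_add_integral_add_sum (fun k _ ↦ hs k) hinj.injOn (hβt t ht)
    linarith [hineq t ht]
  have hcompare : ∀ t ∈ Icc 0 T, Ico 0 t ⊆ {x | v x < u x} →
      ∫ x in 0..t, β x * v x ≤ ∫ x in 0..t, β x * u x := fun t ht hlt ↦
    integral_mono_on_of_le_Ioo_of_nonneg ht.1 ((hβt t ht).mul_impulsiveExp A s c univ)
      (fun x hx ↦ hβu x ⟨hx.1.le, hx.2.le.trans ht.2⟩) fun x hx ↦
      mul_le_mul_of_nonneg_left (hlt ⟨hx.1.le, hx.2⟩).le (hβ0 x ⟨hx.1.le, hx.2.le.trans ht.2⟩)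
  refine fun t ht ↦ Icc_subset_of_forall_mem_nhdsGT_of_Ico_subset (s := {x | v x < u x})
    (fun x hx hlt ↦ ?_) (fun x hx hle ↦ ?_) ht
  · exact hstep x hx (by linarith [hcompare x hx hlt]) fun k hk ↦ (hlt ⟨hs k, hk⟩).le
  · have hx' : x ∈ Icc 0 T := ⟨hx.1, hx.2.le⟩
    have hint := eventually_nhdsGT_integral_lt hx.1
      (hcompare x hx' fun y hy ↦ hle ⟨hy.1, hy.2.le⟩) (hβu_integral_nonneg x hx') (sub_pos.2 haA)
    filter_upwards [self_mem_nhdsWithin, nhdsWithin_le_nhds (eventually_lt_nhds hx.2), hint,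
      eventually_nhdsGT_forall_lt_imp_le s x] with y hxy hyT hint hjump
    have hy : y ∈ Icc 0 T := ⟨hx.1.trans hxy.le, hyT.le⟩
    refine hstep y hy ?_ fun k hk ↦ (hle ⟨hs k, hjump k hk⟩).le
    have : ∫ z in 0..x, β z * u z ≤ ∫ z in 0..y, β z * u z :=
      integral_mono_interval le_rfl hx.1 hxy.le
        ((ae_restrict_iff' measurableSet_Ioc).2 (ae_of_all _ fun z hz ↦
          hβu z ⟨hz.1.le, hz.2.trans hy.2⟩))
        ((hβt y hy).mul_impulsiveExp A s c univ)
    linarith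

theorem impulsive_gronwall_general (T a : ℝ) (ha : 0 ≤ a)
    (r : ℕ) (tk : Fin r → ℝ) (htk : StrictMono tk)
    (htk_mem : ∀ k, tk k ∈ Set.Ioo (0:ℝ) T)
    (c : Fin r → ℝ) (hc : ∀ k, 0 ≤ c k)
    (v β : ℝ → ℝ)
    (hβ0 : ∀ t ∈ Set.Icc (0:ℝ) T, 0 ≤ β t)
    (hβ : IntegrableOn β (Set.Icc 0 T))
    (hineq : ∀ t ∈ Set.Icc (0:ℝ) T,
      v t ≤ a + (∫ s in (0:ℝ)..t, β s * v s) +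
        ∑ k : Fin r, (if tk k < t then c k * v (tk k) else 0)) :
    ∀ t ∈ Set.Icc (0:ℝ) T,
      v t ≤ a * (∏ k : Fin r, (if tk k < t then 1 + c k else 1)) *
        Real.exp (∫ s in (0:ℝ)..t, β s) := by
  intro t ht
  have hcont : Continuous fun A ↦ impulsiveExp A β tk c univ t := by
    unfold impulsiveExp
    fun_prop
  refine ge_of_tendsto (hcont.continuousWithinAt (s := Ioi a) (x := a))
    (eventually_nhdsWithin_of_forall fun A haA ↦ ?_)
  exact (lt_impulsiveExp_of_le_add_integral_add_sum ha haA (fun k ↦ (htk_mem k).1.le)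
    htk.injective hc hβ0 hβ hineq t ht).le

/-- Impulsive Gronwall inequality (Bainov–Simeonov): if a nonnegative piecewise continuous
`v` on `[0,T]` (with possible jumps at `0 < t₁ < ⋯ < t_r < T`) satisfies
`v t ≤ a + ∫₀ᵗ β s * v s ds + Σ_{t_k < t} c_k v(t_k)`, with `a ≥ 0`, `β ≥ 0` integrable and
`c_k ≥ 0`, then `v t ≤ a * ∏_{t_k < t} (1 + c_k) * exp (∫₀ᵗ β s ds)`. -/
theorem impulsive_gronwall (T a : ℝ) (hT : 0 < T) (ha : 0 ≤ a)
    (r : ℕ) (tk : Fin r → ℝ) (htk : StrictMono tk)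
    (htk_mem : ∀ k, tk k ∈ Set.Ioo (0:ℝ) T)
    (c : Fin r → ℝ) (hc : ∀ k, 0 ≤ c k)
    (v β : ℝ → ℝ) (hv_meas : Measurable v)
    (hv_pc : ContinuousOn v (Set.Icc 0 T \ Set.range tk))
    (hv0 : ∀ t ∈ Set.Icc (0:ℝ) T, 0 ≤ v t)
    (hβ0 : ∀ t ∈ Set.Icc (0:ℝ) T, 0 ≤ β t)
    (hβ : IntegrableOn β (Set.Icc 0 T))
    (hineq : ∀ t ∈ Set.Icc (0:ℝ) T,
      v t ≤ a + (∫ s in (0:ℝ)..t, β s * v s) +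
        ∑ k : Fin r, (if tk k < t then c k * v (tk k) else 0)) :
    ∀ t ∈ Set.Icc (0:ℝ) T,
      v t ≤ a * (∏ k : Fin r, (if tk k < t then 1 + c k else 1)) *
        Real.exp (∫ s in (0:ℝ)..t, β s) :=
  impulsive_gronwall_general T a ha r tk htk htk_mem c hc v β hβ0 hβ hineq
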